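/- Let D be an O-consistent Defeasible Theory (the superiority relation > is acyclic and for no literal l does the set of facts F contain both O l and O∼l, or both O l and P∼l). Then for every literal l, if D ⊢ +∂_O l then D ⊢ −∂_O ∼l. -/
import Mathlib


/- Core formalization of the Defeasible Deontic Logic with obligations (O) and
   strong permissions (P) of Governatori, Olivieri, Rotolo, Scannapieco,
   "Computing Strong and Weak Permissions in Defeasible Logic". -/

namespace DDL

/-- The two modalities: O (obligation) and P (permission). -/
inductive Modality : Type
  | O | P
deriving DecidableEq

/-- Literals over a set of propositional atoms. -/
inductive Lit (Atom : Type) : Type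
  | pos : Atom → Lit Atom
  | neg : Atom → Lit Atom
deriving DecidableEq

/-- The complementary literal `∼q`. -/
def Lit.compl {Atom : Type} : Lit Atom → Lit Atom
  | .pos a => .neg a
  | .neg a => .pos a

/-- Elements that may occur in the antecedent of a rule: plain literals and
    (possibly negated) modal literals `□l` / `¬□l`.  The Boolean is `true` for
    `□l` and `false` for `¬□l`. -/
inductive AElem (Atom : Type) : Type
  | lit : Lit Atom → AElem Atom
  | mlit : Bool → Modality → Lit Atom → AElem Atom
deriving DecidableEq

/-- Kinds of rules: defeasible obligation rules `⇒_O`, defeasible permission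
    rules `⇒_P`, and defeaters `⤳`. -/
inductive RuleKind : Type
  | obl | perm | defeater
deriving DecidableEq

/-- A rule `A(r) ↪ C(r)`.  The consequent (an ⊘-expression) is represented by
    its ⊗-part `otimes` followed by its ⊙-part `odot`. -/
structure Rule (Atom : Type) : Type where
  ant : Finset (AElem Atom)
  kind : RuleKind
  otimes : List (Lit Atom)
  odot : List (Lit Atom)
deriving DecidableEq

variable {Atom : Type} [DecidableEq Atom]

/-- The consequent chain of a rule. -/
def Rule.head (r : Rule Atom) : List (Lit Atom) := r.otimes ++ r.odot

/-- `q` appears at (0-based) index `j` of the consequent of `r`:  `r ∈ R[q, j+1]`. -/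
def Rule.occ (r : Rule Atom) (q : Lit Atom) (j : ℕ) : Prop := r.head[j]? = some q

/-- `r ∈ R^O[q, j+1]`: `q` appears at (0-based) index `j`, and either `j = 0` and
    the mode of `r` is O, or `j > 0` and the operator preceding `q` is ⊗. -/
def Rule.occO (r : Rule Atom) (q : Lit Atom) (j : ℕ) : Prop :=
  (j = 0 ∧ r.kind = RuleKind.obl ∧ r.head[0]? = some q) ∨
  (0 < j ∧ r.otimes[j]? = some q)

/-- `r ∈ R^P[q, j+1]`: `q` appears at (0-based) index `j`, and either `j = 0` and
    the mode of `r` is P, or `j > 0` and the operator preceding `q` is ⊙. -/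
def Rule.occP (r : Rule Atom) (q : Lit Atom) (j : ℕ) : Prop :=
  (j = 0 ∧ r.kind = RuleKind.perm ∧ r.head[0]? = some q) ∨
  (0 < j ∧ r.otimes.length ≤ j ∧ r.head[j]? = some q)

/-- `r ∈ R^□[q, j+1]` for `□ ∈ {O, P}`. -/
def Rule.occM (r : Rule Atom) (m : Modality) (q : Lit Atom) (j : ℕ) : Prop :=
  match m with
  | Modality.O => r.occO q j
  | Modality.P => r.occP q j

/-- A Defeasible Theory `D = (F, R, >)`. -/
structure Theory (Atom : Type) : Type where
  F : Finset (AElem Atom)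
  R : Finset (Rule Atom)
  sup : Rule Atom → Rule Atom → Prop

/-- Tagged literals `±∂_□ q`: the Boolean is `true` for `+∂` and `false` for `-∂`. -/
abbrev Tag (Atom : Type) := Bool × Modality × Lit Atom

/-- An initial part `P(1..n)` of a proof. -/
abbrev Pfx (Atom : Type) := List (Tag Atom)

namespace Theory

variable (D : Theory Atom) (Pre : Pfx Atom)

/-- Conditions (1.1)-(1.5) on the antecedent of a rule (all satisfied). -/
def antOK (r : Rule Atom) : Prop :=
  ∀ a ∈ r.ant,
    match a with
    | AElem.lit l => AElem.lit l ∈ D.F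
    | AElem.mlit b m l => (b, m, l) ∈ Pre

/-- Conditions (1.1)-(1.5) for a rule being discarded (some antecedent fails). -/
def antFails (r : Rule Atom) : Prop :=
  ∃ a ∈ r.ant,
    match a with
    | AElem.lit l => AElem.lit l ∉ D.F
    | AElem.mlit b m l => (!b, m, l) ∈ Pre

/-- `c` is a derived and violated obligation: `+∂_O c ∈ P(1..n)` and
    (`c ∉ F` or `∼c ∈ F`). -/
def violated (c : Lit Atom) : Prop :=
  (true, Modality.O, c) ∈ Pre ∧ (AElem.lit c ∉ D.F ∨ AElem.lit c.compl ∈ D.F)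

/-- Definition: `r` is applicable for `q` at index `j` in the condition for
    `±∂_O` (Definition of applicability for obligations). -/
def applO (r : Rule Atom) (q : Lit Atom) (j : ℕ) : Prop :=
  r.occO q j ∧ D.antOK Pre r ∧
  ∀ k < j, ∀ c, r.head[k]? = some c → D.violated Pre c

/-- Definition: `r` is applicable for `q` at index `j` in the condition for
    `±∂_P` (Definition of applicability for permissions). -/
def applP (r : Rule Atom) (q : Lit Atom) (j : ℕ) : Prop :=
  r.occP q j ∧ D.antOK Pre r ∧
  (∀ (k : ℕ) (c : Lit Atom), r.otimes[k]? = some c → D.violated Pre c) ∧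
  (∀ k, r.otimes.length ≤ k → k < j → ∀ c, r.head[k]? = some c → (false, Modality.P, c) ∈ Pre)

/-- Applicability of a defeater (its head is a single literal). -/
def applDef (r : Rule Atom) (q : Lit Atom) (j : ℕ) : Prop :=
  r.kind = RuleKind.defeater ∧ j = 0 ∧ r.head[0]? = some q ∧ D.antOK Pre r

/-- Generic applicability of a rule for `q` at index `j`. -/
def appl (r : Rule Atom) (q : Lit Atom) (j : ℕ) : Prop :=
  D.applO Pre r q j ∨ D.applP Pre r q j ∨ D.applDef Pre r q j

/-- Definition: `r` is discarded for a literal at index `j` in the conditions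
    for `±∂_O` / `±∂_P`. -/
def discardedAt (r : Rule Atom) (j : ℕ) : Prop :=
  D.antFails Pre r ∨
  (∃ (k : ℕ) (c : Lit Atom), r.otimes[k]? = some c ∧
    ((false, Modality.O, c) ∈ Pre ∨ AElem.lit c ∈ D.F)) ∨
  (∃ k, r.otimes.length ≤ k ∧ k < j ∧ ∃ c, r.head[k]? = some c ∧ (true, Modality.P, c) ∈ Pre)

/-- Proof condition for `+∂_O q` (relative to the proof prefix `Pre`). -/
def plusO (q : Lit Atom) : Prop :=
  AElem.mlit true Modality.O q ∈ D.F ∨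
  (AElem.mlit true Modality.O q.compl ∉ D.F ∧
   AElem.mlit false Modality.O q ∉ D.F ∧
   AElem.mlit true Modality.P q.compl ∉ D.F ∧
   (∃ r ∈ D.R, ∃ i, D.applO Pre r q i) ∧
   (∀ s ∈ D.R, ∀ j, s.occ q.compl j →
     D.discardedAt Pre s j ∨
     (s.kind = RuleKind.obl ∧
       ∃ t ∈ D.R, ∃ k, t.occ q k ∧ D.appl Pre t q k ∧ D.sup t s) ∨
     ((s.kind = RuleKind.perm ∨ s.kind = RuleKind.defeater) ∧
       ∃ t ∈ D.R, ∃ k, t.occO q k ∧ D.applO Pre t q k ∧ D.sup t s)))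

/-- Proof condition for `-∂_O q` (strong negation of `+∂_O`). -/
def minusO (q : Lit Atom) : Prop :=
  AElem.mlit true Modality.O q ∉ D.F ∧
  (AElem.mlit true Modality.O q.compl ∈ D.F ∨
   AElem.mlit false Modality.O q ∈ D.F ∨
   AElem.mlit true Modality.P q.compl ∈ D.F ∨
   (∀ r ∈ D.R, ∀ i, r.occO q i → D.discardedAt Pre r i) ∨
   (∃ s ∈ D.R, ∃ j, s.occ q.compl j ∧ D.appl Pre s q.compl j ∧
     (s.kind = RuleKind.obl →
       ∀ t ∈ D.R, ∀ k, t.occ q k → D.discardedAt Pre t k ∨ ¬ D.sup t s) ∧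
     ((s.kind = RuleKind.perm ∨ s.kind = RuleKind.defeater) →
       ∀ t ∈ D.R, ∀ k, t.occO q k → D.discardedAt Pre t k ∨ ¬ D.sup t s)))

/-- Proof condition for `+∂_P q`. -/
def plusP (q : Lit Atom) : Prop :=
  AElem.mlit true Modality.P q ∈ D.F ∨
  (AElem.mlit true Modality.O q.compl ∉ D.F ∧
   AElem.mlit false Modality.P q ∉ D.F ∧
   (∃ r ∈ D.R, ∃ i, D.applP Pre r q i) ∧
   (∀ s ∈ D.R, ∀ j, s.occO q.compl j →
     D.discardedAt Pre s j ∨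
     (∃ t ∈ D.R, ∃ k, t.occ q k ∧ D.appl Pre t q k ∧ D.sup t s)))

/-- Proof condition for `-∂_P q` (strong negation of `+∂_P`). -/
def minusP (q : Lit Atom) : Prop :=
  AElem.mlit true Modality.P q ∉ D.F ∧
  (AElem.mlit true Modality.O q.compl ∈ D.F ∨
   AElem.mlit false Modality.P q ∈ D.F ∨
   (∀ r ∈ D.R, ∀ i, r.occP q i → D.discardedAt Pre r i) ∨
   (∃ s ∈ D.R, ∃ j, s.occO q.compl j ∧ D.appl Pre s q.compl j ∧
     ∀ t ∈ D.R, ∀ k, t.occ q k → D.discardedAt Pre t k ∨ ¬ D.sup t s))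

/-- The proof condition associated to a tagged literal. -/
def cond : Tag Atom → Prop
  | (true, Modality.O, q) => D.plusO Pre q
  | (false, Modality.O, q) => D.minusO Pre q
  | (true, Modality.P, q) => D.plusP Pre q
  | (false, Modality.P, q) => D.minusP Pre q

/-- A proof is a sequence of tagged literals each of which satisfies the
    proof conditions relative to the preceding initial part. -/
def ValidProof (Pr : Pfx Atom) : Prop :=
  ∀ i (h : i < Pr.length), D.cond (Pr.take i) (Pr.get ⟨i, h⟩)

/-- `D ⊢ ±∂_□ q`: some proof in `D` contains (ends with) `±∂_□ q`. -/
def Proves (b : Bool) (m : Modality) (q : Lit Atom) : Prop :=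
  ∃ Pr : Pfx Atom, D.ValidProof Pr ∧ (b, m, q) ∈ Pr

end Theory

/-- The superiority relation is acyclic: its transitive closure has no cycles. -/
def Acyclic (D : Theory Atom) : Prop :=
  ∀ r : Rule Atom, ¬ Relation.TransGen D.sup r r

/-- A consistent Defeasible Theory: `>` is acyclic and `F` contains no pair of
    complementary (modal) literals. -/
def Consistent (D : Theory Atom) : Prop :=
  Acyclic D ∧
  (∀ (m : Modality) (l : Lit Atom),
      ¬ (AElem.mlit true m l ∈ D.F ∧ AElem.mlit false m l ∈ D.F)) ∧
  (∀ l : Lit Atom, ¬ (AElem.lit l ∈ D.F ∧ AElem.lit l.compl ∈ D.F))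

/-- An O-consistent Defeasible Theory: `>` is acyclic and for no literal `l`
    does `F` contain both `O l` and `O ∼l`, or both `O l` and `P ∼l`. -/
def OConsistent (D : Theory Atom) : Prop :=
  Acyclic D ∧
  (∀ l : Lit Atom,
      ¬ (AElem.mlit true Modality.O l ∈ D.F ∧ AElem.mlit true Modality.O l.compl ∈ D.F)) ∧
  (∀ l : Lit Atom,
      ¬ (AElem.mlit true Modality.O l ∈ D.F ∧ AElem.mlit true Modality.P l.compl ∈ D.F))

end DDL

namespace DDL


variable {Atom : Type} [DecidableEq Atom]

omit [DecidableEq Atom] in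
lemma Lit.compl_compl' (l : Lit Atom) : l.compl.compl = l := by
  cases l <;> rfl

omit [DecidableEq Atom] in
lemma Rule.occO_occ {r : Rule Atom} {q : Lit Atom} {j : ℕ} (h : r.occO q j) : r.occ q j := by
  rcases h with ⟨rfl, _, h⟩ | ⟨_, h⟩
  · exact h
  · have hlt : j < r.otimes.length := (List.getElem?_eq_some_iff.mp h).1
    unfold Rule.occ Rule.head
    rw [List.getElem?_append_left hlt]
    exact h

/-- Key lemma: `plusO` relative to a prefix implies `minusO` of the complement
relative to the same prefix. -/
lemma plusO_minusO {D : Theory Atom} (hD : OConsistent D) (Pre : Pfx Atom)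
    {l : Lit Atom} (h : D.plusO Pre l) : D.minusO Pre l.compl := by
  rcases h with hF | ⟨hnO, hnmO, hnP, ⟨r, hrR, i, hri⟩, hAll⟩
  · -- O l ∈ F: use O-consistency
    refine ⟨fun hc => hD.2.1 l ⟨hF, hc⟩, Or.inl ?_⟩
    rw [Lit.compl_compl']; exact hF
  · refine ⟨hnO, ?_⟩
    -- find a "maximal" applicable rule for l
    set P : Rule Atom → Prop :=
      fun s => s ∈ D.R ∧ ∃ j, s.occ l j ∧ D.appl Pre s l j with hP
    set Bad : Rule Atom → Prop :=
      fun s => ∃ t ∈ D.R, ∃ k, t.occ l.compl k ∧ ¬ D.discardedAt Pre t k ∧ D.sup t s with hBad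
    have hPr : P r := ⟨hrR, i, Rule.occO_occ hri.1, Or.inl hri⟩
    have hstep : ∀ s, P s → Bad s → ∃ u, P u ∧ Relation.TransGen D.sup u s := by
      rintro s _ ⟨t, htR, k, htocc, htnd, htsup⟩
      rcases hAll t htR k htocc with hd | ⟨_, u, huR, k', hocc, happ, hsup⟩ |
          ⟨_, u, huR, k', hocc, happ, hsup⟩
      · exact absurd hd htnd
      · exact ⟨u, ⟨huR, k', hocc, happ⟩,
          (Relation.TransGen.single htsup).head hsup⟩
      · exact ⟨u, ⟨huR, k', Rule.occO_occ hocc, Or.inl happ⟩,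
          (Relation.TransGen.single htsup).head hsup⟩
    have hgood : ∃ s, P s ∧ ¬ Bad s := by
      by_contra hcon
      push_neg at hcon
      have hstep' : ∀ s : {s // P s}, ∃ u : {s // P s},
          Relation.TransGen D.sup u.1 s.1 := by
        rintro ⟨s, hs⟩
        obtain ⟨u, hu, ht⟩ := hstep s hs (hcon s hs)
        exact ⟨⟨u, hu⟩, ht⟩
      let g : ℕ → {s // P s} := fun n =>
        Nat.rec ⟨r, hPr⟩ (fun _ prev => (hstep' prev).choose) n
      have hg : ∀ n, Relation.TransGen D.sup (g (n+1)).1 (g n).1 :=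
        fun n => (hstep' (g n)).choose_spec
      have hchain : ∀ n m, m < n → Relation.TransGen D.sup (g n).1 (g m).1 := by
        intro n
        induction n with
        | zero => omega
        | succ n ih =>
          intro m hm
          rcases Nat.lt_succ_iff_lt_or_eq.mp hm with hm' | rfl
          · exact (hg n).trans (ih m hm')
          · exact hg m
      have : ∃ a b : ℕ, a ≠ b ∧
          (fun n => (⟨(g n).1, (g n).2.1⟩ : {x // x ∈ D.R})) a =
          (fun n => (⟨(g n).1, (g n).2.1⟩ : {x // x ∈ D.R})) b :=
        Finite.exists_ne_map_eq_of_infinite _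
      obtain ⟨a, b, hab, heq⟩ := this
      have heq' : (g a).1 = (g b).1 :=
        congrArg (fun x : {x // x ∈ D.R} => x.1) heq
      rcases hab.lt_or_gt with h' | h'
      · exact hD.1 _ (heq' ▸ hchain b a h')
      · exact hD.1 _ (heq' ▸ hchain a b h')
    obtain ⟨s, ⟨hsR, j, hsocc, hsappl⟩, hnb⟩ := hgood
    simp only [hBad] at hnb
    push_neg at hnb
    refine Or.inr <| Or.inr <| Or.inr <| Or.inr ⟨s, hsR, j, ?_, ?_, ?_, ?_⟩
    · rw [Lit.compl_compl']; exact hsocc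
    · rw [Lit.compl_compl']; exact hsappl
    · intro _ t htR k htocc
      rcases Classical.em (D.discardedAt Pre t k) with hd | hd
      · exact Or.inl hd
      · exact Or.inr (hnb t htR k htocc hd)
    · intro _ t htR k htocc
      rcases Classical.em (D.discardedAt Pre t k) with hd | hd
      · exact Or.inl hd
      · exact Or.inr (hnb t htR k (Rule.occO_occ htocc) hd)

/-- **Proposition 3(1).**  Let `D` be an O-consistent Defeasible Theory.  For
every literal `l`, if `D ⊢ +∂_O l` then `D ⊢ −∂_O ∼l`. -/
theorem oconsistent_plusO_minusO_compl
    {Atom : Type} [DecidableEq Atom] (D : Theory Atom) (hD : OConsistent D) :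
    ∀ l : Lit Atom,
      D.Proves true Modality.O l → D.Proves false Modality.O l.compl := by
  intro l ⟨Pr, hval, hmem⟩
  obtain ⟨⟨i, hi⟩, hget⟩ := List.mem_iff_get.mp hmem
  have hplus : D.plusO (Pr.take i) l := by
    have := hval i hi
    rw [hget] at this
    exact this
  have hminus := plusO_minusO hD (Pr.take i) hplus
  refine ⟨Pr.take i ++ [(false, Modality.O, l.compl)], ?_, by simp⟩
  intro j hj
  have hlen : (Pr.take i).length = i := by simp [hi.le]
  have hj' : j ≤ i := by simp [hlen] at hj; omega
  have htake : (Pr.take i ++ [(false, Modality.O, l.compl)]).take j = Pr.take j := by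
    rw [List.take_append_of_le_length (by omega), List.take_take, min_eq_left hj']
  rcases lt_or_eq_of_le hj' with hlt | rfl
  · have hget' : (Pr.take i ++ [(false, Modality.O, l.compl)]).get ⟨j, hj⟩ =
        Pr.get ⟨j, by omega⟩ := by
      rw [List.get_eq_getElem,
        List.getElem_append_left (by exact lt_of_lt_of_eq hlt hlen.symm)]
      simp [List.getElem_take]
    rw [htake, hget']
    exact hval j (by omega)
  · have hget' : (Pr.take j ++ [(false, Modality.O, l.compl)]).get ⟨j, hj⟩ =
        (false, Modality.O, l.compl) := by
      rw [List.get_eq_getElem, List.getElem_append_right (by exact hlen.le)]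
      simp [hlen]
    rw [htake, hget']
    exact hminus

end DDL
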